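/- arXiv:1408.4028 — 4 statements merged into one kernel-verified Lean document; each statement's English description precedes it below -/
import Mathlib

section
/- Let N ∈ ℕ, let Lᵅⱼ : ℝᴺ → ℝ be continuously differentiable for α ∈ {0,1} and j ∈ {1,…,N}, let H : ℝᴺ → ℝ be differentiable, set Kᵅᵢⱼ = ∂Lᵅⱼ/∂zⁱ − ∂Lᵅᵢ/∂zʲ, and let z : ℝ² → ℝᴺ be a twice continuously differentiable solution of the multi-symplectic system Σ_{α,j} Kᵅᵢⱼ(z)·∂zʲ/∂xᵅ = (∂H/∂zⁱ)(z) for all i and all (x⁰,x¹). Then for each β ∈ {0,1} the pullback conservation law Σ_α ∂/∂xᵅ [ Σ_j Lᵅⱼ(z)·∂zʲ/∂xᵝ − δᵅ_β·L̃ ] = 0 holds, where L̃ = Σ_{α,j} Lᵅⱼ(z)·∂zʲ/∂xᵅ − H(z) and δᵅ_β is the Kronecker delta. -/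
/-! Differentiating `Lᵅⱼ(z) z^j_{,β}` and `L̃` by the product and chain rules, the terms with
second derivatives of `z` cancel because `z_{,αβ} = z_{,βα}`. What remains is
`∂H/∂zⁱ(z) z^i_{,β} - Σ_{α,i,j} z^i_{,β} Kᵅᵢⱼ(z) z^j_{,α}`, which is the multi-symplectic system
contracted with `z_{,β}`. -/

theorem ContinuousLinearMap.apply_eq_sum_mul_single {σ : Type*} [Fintype σ] [DecidableEq σ]
    (f : (σ → ℝ) →L[ℝ] ℝ) (w : σ → ℝ) : f w = ∑ i, w i * f (Pi.single i 1) := by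
  conv_lhs => rw [← Finset.univ_sum_single w]
  refine (map_sum f _ _).trans (Finset.sum_congr rfl fun i _ => ?_)
  rw [← smul_eq_mul, ← map_smul, ← Pi.single_smul', smul_eq_mul, mul_one]

theorem sum_mul_apply_sub_eq_sum_single {σ : Type*} [Fintype σ]
    [DecidableEq σ] (dL : σ → (σ → ℝ) →L[ℝ] ℝ) (u w : σ → ℝ) :
    ∑ j, (u j * dL j w - w j * dL j u)
      = ∑ i, w i * ∑ j, (dL j (Pi.single i 1) - dL i (Pi.single j 1)) * u j := by
  simp only [(dL _).apply_eq_sum_mul_single w, (dL _).apply_eq_sum_mul_single u, Finset.mul_sum,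
    Finset.sum_sub_distrib]
  rw [Finset.sum_comm (f := fun j i => u j * (w i * _))]
  simp only [mul_sub, sub_mul, Finset.sum_sub_distrib]
  congr 1 <;> exact Finset.sum_congr rfl fun _ _ => Finset.sum_congr rfl fun _ _ => by ring

theorem sum_sum_mul_apply_sub_eq_of_single {ι σ : Type*} [Fintype ι] [Fintype σ]
    [DecidableEq σ] (dL : ι → σ → (σ → ℝ) →L[ℝ] ℝ) (dH : (σ → ℝ) →L[ℝ] ℝ) (u : ι → σ → ℝ)
    (h : ∀ i, ∑ α, ∑ j, (dL α j (Pi.single i 1) - dL α i (Pi.single j 1)) * u α j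
      = dH (Pi.single i 1)) (w : σ → ℝ) :
    ∑ α, ∑ j, (u α j * dL α j w - w j * dL α j (u α)) = dH w := by
  simp only [dH.apply_eq_sum_mul_single w, ← h, sum_mul_apply_sub_eq_sum_single, Finset.mul_sum]
  exact Finset.sum_comm

theorem fderiv_sub_ite_apply {E : Type*} [NormedAddCommGroup E] [NormedSpace ℝ E]
    {f g : E → ℝ} {q : E} (p : Prop) [Decidable p] (hf : DifferentiableAt ℝ f q)
    (hg : DifferentiableAt ℝ g q) (w : E) :
    fderiv ℝ (fun q' => f q' - if p then g q' else 0) q w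
      = fderiv ℝ f q w - if p then fderiv ℝ g q w else 0 := by
  split_ifs
  · simp [fderiv_fun_sub hf hg]
  · simp

section

variable {E σ : Type*} [NormedAddCommGroup E] [NormedSpace ℝ E] [Fintype σ]
  {z : E → σ → ℝ} {q : E}

theorem hasFDerivAt_comp_mul_fderiv_apply {g : (σ → ℝ) → ℝ} (hg : DifferentiableAt ℝ g (z q))
    (hz : ContDiffAt ℝ 2 z q) (v : E) (j : σ) :
    HasFDerivAt (fun q' => g (z q') * fderiv ℝ z q' v j)
      (g (z q) • (ContinuousLinearMap.proj j).comp ((fderiv ℝ (fderiv ℝ z) q).flip v)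
        + fderiv ℝ z q v j • (fderiv ℝ g (z q)).comp (fderiv ℝ z q)) q := by
  have hz' : DifferentiableAt ℝ (fderiv ℝ z) q :=
    (hz.fderiv_right (m := 1) le_rfl).differentiableAt one_ne_zero
  have hpartial : ∀ i, HasFDerivAt (fun q' => fderiv ℝ z q' v i)
      ((ContinuousLinearMap.proj i).comp ((fderiv ℝ (fderiv ℝ z) q).flip v)) q := by
    simpa using hz'.hasFDerivAt.clm_apply (hasFDerivAt_const v q)
  exact (hg.hasFDerivAt.comp q (hz.differentiableAt two_ne_zero).hasFDerivAt).mul (hpartial j)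

variable {g : σ → (σ → ℝ) → ℝ}

theorem differentiableAt_sum_comp_mul_fderiv_apply (hg : ∀ j, DifferentiableAt ℝ (g j) (z q))
    (hz : ContDiffAt ℝ 2 z q) (v : E) :
    DifferentiableAt ℝ (fun q' => ∑ j, g j (z q') * fderiv ℝ z q' v j) q :=
  (HasFDerivAt.fun_sum fun j _ => hasFDerivAt_comp_mul_fderiv_apply (hg j) hz v j).differentiableAt

theorem fderiv_sum_comp_mul_fderiv_apply (hg : ∀ j, DifferentiableAt ℝ (g j) (z q))
    (hz : ContDiffAt ℝ 2 z q) (v w : E) :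
    fderiv ℝ (fun q' => ∑ j, g j (z q') * fderiv ℝ z q' v j) q w
      = ∑ j, (g j (z q) * fderiv ℝ (fderiv ℝ z) q w v j
        + fderiv ℝ z q v j * fderiv ℝ (g j) (z q) (fderiv ℝ z q w)) := by
  rw [(HasFDerivAt.fun_sum fun j _ => hasFDerivAt_comp_mul_fderiv_apply (hg j) hz v j).fderiv]
  simp

variable {ι : Type*} [Fintype ι]

noncomputable def lagrangianDensity (L : ι → σ → (σ → ℝ) → ℝ) (H : (σ → ℝ) → ℝ) (e : ι → E)
    (z : E → σ → ℝ) (q : E) : ℝ :=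
  (∑ α, ∑ j, L α j (z q) * fderiv ℝ z q (e α) j) - H (z q)

variable {L : ι → σ → (σ → ℝ) → ℝ} {H : (σ → ℝ) → ℝ}

theorem differentiableAt_lagrangianDensity (hL : ∀ α j, DifferentiableAt ℝ (L α j) (z q))
    (hH : DifferentiableAt ℝ H (z q)) (hz : ContDiffAt ℝ 2 z q) (e : ι → E) :
    DifferentiableAt ℝ (lagrangianDensity L H e z) q :=
  (DifferentiableAt.fun_sum fun α _ =>
    differentiableAt_sum_comp_mul_fderiv_apply (hL α) hz (e α)).sub
    (hH.comp q (hz.differentiableAt two_ne_zero))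

theorem fderiv_lagrangianDensity_apply (hL : ∀ α j, DifferentiableAt ℝ (L α j) (z q))
    (hH : DifferentiableAt ℝ H (z q)) (hz : ContDiffAt ℝ 2 z q) (e : ι → E) (w : E) :
    fderiv ℝ (lagrangianDensity L H e z) q w
      = (∑ α, ∑ j, (L α j (z q) * fderiv ℝ (fderiv ℝ z) q w (e α) j
          + fderiv ℝ z q (e α) j * fderiv ℝ (L α j) (z q) (fderiv ℝ z q w)))
        - fderiv ℝ H (z q) (fderiv ℝ z q w) := by
  have hz' := hz.differentiableAt two_ne_zero
  have hHz : DifferentiableAt ℝ (fun q' => H (z q')) q := hH.comp q hz'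
  have hP := fun α => differentiableAt_sum_comp_mul_fderiv_apply (hL α) hz (e α)
  unfold lagrangianDensity
  rw [fderiv_fun_sub (DifferentiableAt.fun_sum fun α _ => hP α) hHz,
    fderiv_fun_sum fun α _ => hP α, fderiv_fun_comp q hH hz']
  simp [fderiv_sum_comp_mul_fderiv_apply (hL _) hz]

end

/-- Pullback conservation laws for a multi-symplectic system: if `z` solves
`Kᵅᵢⱼ(z) z^j_{,α} = ∂H/∂zⁱ(z)`, then for each `β`,
`∂_α [ Lᵅⱼ(z) z^j_{,β} - δᵅ_β L̃ ] = 0`, where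
`L̃ = Lᵅⱼ(z) z^j_{,α} - H(z)`. -/
theorem pullback_conservation_laws
    (N : ℕ)
    (L : Fin 2 → Fin N → (Fin N → ℝ) → ℝ)
    (hL : ∀ α j, ContDiff ℝ 1 (L α j))
    (H : (Fin N → ℝ) → ℝ) (hH : Differentiable ℝ H)
    (K : Fin 2 → Fin N → Fin N → (Fin N → ℝ) → ℝ)
    (hK : ∀ α i j v, K α i j v
      = fderiv ℝ (L α j) v (Pi.single i 1) - fderiv ℝ (L α i) v (Pi.single j 1))
    (z : (Fin 2 → ℝ) → (Fin N → ℝ)) (hz : ContDiff ℝ 2 z)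
    (Lt : (Fin 2 → ℝ) → ℝ)
    (hLt : ∀ q, Lt q
      = (∑ α : Fin 2, ∑ j : Fin N, L α j (z q) * fderiv ℝ z q (Pi.single α 1) j)
        - H (z q))
    (hsol : ∀ (i : Fin N) (q : Fin 2 → ℝ),
      (∑ α : Fin 2, ∑ j : Fin N, K α i j (z q) * fderiv ℝ z q (Pi.single α 1) j)
        = fderiv ℝ H (z q) (Pi.single i 1)) :
    ∀ (β : Fin 2) (q : Fin 2 → ℝ),
      ∑ α : Fin 2,
        fderiv ℝ (fun q' =>
            (∑ j : Fin N, L α j (z q') * fderiv ℝ z q' (Pi.single β 1) j)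
              - (if α = β then Lt q' else 0)) q (Pi.single α 1) = 0 := by
  intro β q
  have hzq : ContDiffAt ℝ 2 z q := hz.contDiffAt
  have hLq : ∀ α j, DifferentiableAt ℝ (L α j) (z q) :=
    fun α j => (hL α j).differentiable one_ne_zero _
  have hLt_eq : Lt = lagrangianDensity L H (fun α => Pi.single α 1) z := funext hLt
  subst hLt_eq
  have hsymm : ∀ α : Fin 2, fderiv ℝ (fderiv ℝ z) q (Pi.single α 1) (Pi.single β 1)
      = fderiv ℝ (fderiv ℝ z) q (Pi.single β 1) (Pi.single α 1) :=
    fun α => hzq.isSymmSndFDerivAt (by simp [minSmoothness_of_isRCLikeNormedField]) _ _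
  have hcontr := sum_sum_mul_apply_sub_eq_of_single (fun α j => fderiv ℝ (L α j) (z q))
    (fderiv ℝ H (z q)) (fun α => fderiv ℝ z q (Pi.single α 1))
    (fun i => by simpa only [hK] using hsol i q) (fderiv ℝ z q (Pi.single β 1))
  simp only [fderiv_sub_ite_apply _ (differentiableAt_sum_comp_mul_fderiv_apply (hLq _) hzq _)
      (differentiableAt_lagrangianDensity hLq (hH _) hzq _),
    Finset.sum_sub_distrib, Finset.sum_ite_eq', Finset.mem_univ, if_true,
    fderiv_lagrangianDensity_apply hLq (hH _) hzq, fderiv_sum_comp_mul_fderiv_apply (hLq _) hzq,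
    hsymm, Finset.sum_add_distrib] at hcontr ⊢
  linear_combination -hcontr
end

section
/- Let N ∈ ℕ, let Lᵅⱼ : ℝᴺ → ℝ be twice continuously differentiable for α ∈ {0,1} and j ∈ {1,…,N}, let H : ℝᴺ → ℝ be twice continuously differentiable, set Kᵅᵢⱼ = ∂Lᵅⱼ/∂zⁱ − ∂Lᵅᵢ/∂zʲ, and let z : ℝ² → ℝᴺ be a twice continuously differentiable solution of Σ_{α,j} Kᵅᵢⱼ(z)·∂zʲ/∂xᵅ = (∂H/∂zⁱ)(z) for all i and all (x⁰,x¹). Then the symplecticity conservation law Σ_α ∂/∂xᵅ [ Σ_{i,j} Kᵅᵢⱼ(z)·(∂zⁱ/∂x⁰)·(∂zʲ/∂x¹) ] = 0 holds at every point. -/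
/-!
Contracting the field equations with `∂z/∂xᵝ` and using the skew-symmetry of `Kᵅ` identifies the
symplecticity fluxes with derivatives of the Hamiltonian along the solution:
`Σᵢⱼ K¹ᵢⱼ(z) ∂₀zⁱ ∂₁zʲ = ∂₀(H ∘ z)` and `Σᵢⱼ K⁰ᵢⱼ(z) ∂₀zⁱ ∂₁zʲ = -∂₁(H ∘ z)`.
The conservation law is then the symmetry of the second derivative of `H ∘ z`.
-/

open Finset Matrix

namespace MultiSymplectic

section Pairing

variable {ι : Type*} [Fintype ι]

def pairing (A : ι → ι → ℝ) (u v : ι → ℝ) : ℝ :=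
  ∑ i, ∑ j, A i j * u i * v j

variable {A : ι → ι → ℝ}

theorem pairing_swap (hA : ∀ i j, A i j = -A j i) (u v : ι → ℝ) :
    pairing A u v = -pairing A v u := by
  unfold pairing
  rw [sum_comm, ← sum_neg_distrib]
  refine sum_congr rfl fun i _ => ?_
  rw [← sum_neg_distrib]
  exact sum_congr rfl fun j _ => by rw [hA]; ring

theorem pairing_self (hA : ∀ i j, A i j = -A j i) (u : ι → ℝ) : pairing A u u = 0 := by
  linarith [pairing_swap hA u u]

theorem sum_pairing_eq_dotProduct {κ : Type*} [Fintype κ] (A : κ → ι → ι → ℝ)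
    (w : κ → ι → ℝ) (g : ι → ℝ) (h : ∀ i, ∑ α, ∑ j, A α i j * w α j = g i) (u : ι → ℝ) :
    ∑ α, pairing (A α) u (w α) = u ⬝ᵥ g := by
  calc ∑ α, pairing (A α) u (w α)
      = ∑ i, u i * ∑ α, ∑ j, A α i j * w α j := by
        simp only [pairing, mul_sum]
        rw [sum_comm]
        exact sum_congr rfl fun i _ => sum_congr rfl fun α _ => sum_congr rfl fun j _ => by ring
    _ = u ⬝ᵥ g := by simp only [h, dotProduct]

theorem pairing_fluxes_eq {A : Fin 2 → ι → ι → ℝ} (hA : ∀ α i j, A α i j = -A α j i)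
    (w : Fin 2 → ι → ℝ) (g : ι → ℝ) (h : ∀ i, ∑ α, ∑ j, A α i j * w α j = g i) :
    pairing (A 0) (w 0) (w 1) = -(w 1 ⬝ᵥ g) ∧ pairing (A 1) (w 0) (w 1) = w 0 ⬝ᵥ g := by
  have h₀ := sum_pairing_eq_dotProduct A w g h (w 0)
  have h₁ := sum_pairing_eq_dotProduct A w g h (w 1)
  rw [Fin.sum_univ_two, pairing_self (hA 0), zero_add] at h₀
  rw [Fin.sum_univ_two, pairing_self (hA 1), add_zero, pairing_swap (hA 0)] at h₁
  exact ⟨by linarith, h₀⟩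

end Pairing

theorem _root_.ContinuousLinearMap.apply_eq_dotProduct {ι : Type*} [Fintype ι] [DecidableEq ι]
    (φ : (ι → ℝ) →L[ℝ] ℝ) (u : ι → ℝ) : φ u = u ⬝ᵥ fun i => φ (Pi.single i 1) := by
  conv_lhs => rw [pi_eq_sum_univ' u]
  simp [map_sum, dotProduct]

theorem fderiv_comp_apply_eq_dotProduct {ι E : Type*} [Fintype ι] [DecidableEq ι]
    [NormedAddCommGroup E] [NormedSpace ℝ E] {H : (ι → ℝ) → ℝ} {z : E → ι → ℝ} {p : E}
    (hH : DifferentiableAt ℝ H (z p)) (hz : DifferentiableAt ℝ z p) (v : E) :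
    fderiv ℝ (H ∘ z) p v = fderiv ℝ z p v ⬝ᵥ fun i => fderiv ℝ H (z p) (Pi.single i 1) := by
  rw [fderiv_comp p hH hz]
  exact (fderiv ℝ H (z p)).apply_eq_dotProduct _

theorem fderiv_fderiv_apply_comm {E F : Type*} [NormedAddCommGroup E] [NormedSpace ℝ E]
    [NormedAddCommGroup F] [NormedSpace ℝ F] {f : E → F} {x : E} (hf : ContDiffAt ℝ 2 f x)
    (v w : E) :
    fderiv ℝ (fun y => fderiv ℝ f y v) x w = fderiv ℝ (fun y => fderiv ℝ f y w) x v := by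
  have hf' : DifferentiableAt ℝ (fderiv ℝ f) x :=
    (hf.fderiv_right (m := 1) le_rfl).differentiableAt one_ne_zero
  simp only [fderiv_clm_apply hf' (differentiableAt_const _), fderiv_const_apply,
    ContinuousLinearMap.comp_zero, zero_add, ContinuousLinearMap.flip_apply]
  exact hf.isSymmSndFDerivAt (by simp) w v

end MultiSymplectic

open MultiSymplectic

theorem symplecticity_conservation_law_general
    (N : ℕ)
    (L : Fin 2 → Fin N → (Fin N → ℝ) → ℝ)
    (H : (Fin N → ℝ) → ℝ) (hH : ContDiff ℝ 2 H)
    (K : Fin 2 → Fin N → Fin N → (Fin N → ℝ) → ℝ)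
    (hK : ∀ α i j v, K α i j v
      = fderiv ℝ (L α j) v (Pi.single i 1) - fderiv ℝ (L α i) v (Pi.single j 1))
    (z : (Fin 2 → ℝ) → (Fin N → ℝ)) (hz : ContDiff ℝ 2 z)
    (hsol : ∀ (i : Fin N) (q : Fin 2 → ℝ),
      (∑ α : Fin 2, ∑ j : Fin N, K α i j (z q) * fderiv ℝ z q (Pi.single α 1) j)
        = fderiv ℝ H (z q) (Pi.single i 1)) :
    ∀ q : Fin 2 → ℝ,
      ∑ α : Fin 2,
        fderiv ℝ (fun q' =>
            ∑ i : Fin N, ∑ j : Fin N,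
              K α i j (z q') * fderiv ℝ z q' (Pi.single 0 1) i
                * fderiv ℝ z q' (Pi.single 1 1) j) q (Pi.single α 1) = 0 := by
  intro q
  have hKskew : ∀ α i j v, K α i j v = -K α j i v := fun α i j v => by rw [hK, hK]; ring
  have hfluxes : ∀ p,
      pairing (fun i j => K 0 i j (z p)) (fderiv ℝ z p (Pi.single 0 1))
          (fderiv ℝ z p (Pi.single 1 1)) = -fderiv ℝ (H ∘ z) p (Pi.single 1 1) ∧
      pairing (fun i j => K 1 i j (z p)) (fderiv ℝ z p (Pi.single 0 1))
          (fderiv ℝ z p (Pi.single 1 1)) = fderiv ℝ (H ∘ z) p (Pi.single 0 1) := by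
    intro p
    simp only [fderiv_comp_apply_eq_dotProduct (hH.differentiable two_ne_zero _)
      (hz.differentiable two_ne_zero p)]
    exact pairing_fluxes_eq (fun α i j => hKskew α i j (z p)) _ _ (hsol · p)
  have hF₀ := funext fun p => (hfluxes p).1
  have hF₁ := funext fun p => (hfluxes p).2
  simp only [pairing] at hF₀ hF₁
  rw [Fin.sum_univ_two, hF₀, hF₁, fderiv_fun_neg, _root_.neg_apply,
    fderiv_fderiv_apply_comm (hH.comp hz).contDiffAt, neg_add_cancel]

/-- Symplecticity conservation law: if `z` solves the multi-symplectic system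
`Kᵅᵢⱼ(z) z^j_{,α} = ∂H/∂zⁱ(z)`, then
`∂_α [ Kᵅᵢⱼ(z) z^i_{,0} z^j_{,1} ] = 0`. -/
theorem symplecticity_conservation_law
    (N : ℕ)
    (L : Fin 2 → Fin N → (Fin N → ℝ) → ℝ)
    (hL : ∀ α j, ContDiff ℝ 2 (L α j))
    (H : (Fin N → ℝ) → ℝ) (hH : ContDiff ℝ 2 H)
    (K : Fin 2 → Fin N → Fin N → (Fin N → ℝ) → ℝ)
    (hK : ∀ α i j v, K α i j v
      = fderiv ℝ (L α j) v (Pi.single i 1) - fderiv ℝ (L α i) v (Pi.single j 1))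
    (z : (Fin 2 → ℝ) → (Fin N → ℝ)) (hz : ContDiff ℝ 2 z)
    (hsol : ∀ (i : Fin N) (q : Fin 2 → ℝ),
      (∑ α : Fin 2, ∑ j : Fin N, K α i j (z q) * fderiv ℝ z q (Pi.single α 1) j)
        = fderiv ℝ H (z q) (Pi.single i 1)) :
    ∀ q : Fin 2 → ℝ,
      ∑ α : Fin 2,
        fderiv ℝ (fun q' =>
            ∑ i : Fin N, ∑ j : Fin N,
              K α i j (z q') * fderiv ℝ z q' (Pi.single 0 1) i
                * fderiv ℝ z q' (Pi.single 1 1) j) q (Pi.single α 1) = 0 :=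
  symplecticity_conservation_law_general N L H hH K hK z hz hsol
end

section
/- Let x, u, S, r : ℝ × ℝ → ℝ be twice continuously differentiable functions of (m,t) with x_m > 0 everywhere, and suppose u = x_t, S_t = 0, u_t + ∂P/∂m = 0, and r_t = −T∘(ρ,S), where ρ = 1/x_m, P(m,t) = p(ρ,S), p(ρ,S) = ρ·∂ε/∂ρ − ε, T(ρ,S) = (1/ρ)·∂ε/∂S, and W(m,t) = (ε(ρ,S) + P)/ρ. Then the nonlocal m-translation conservation law holds: ∂/∂t [ u·x_m + r·S_m ] + ∂/∂m [ W − u²/2 ] = 0 at every point. -/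
lemma pd1_hasDerivAt {F : ℝ → ℝ → ℝ} {m t : ℝ}
    (hF : DifferentiableAt ℝ (fun q : ℝ × ℝ => F q.1 q.2) (m, t)) :
    HasDerivAt (fun m' => F m' t)
      (fderiv ℝ (fun q : ℝ × ℝ => F q.1 q.2) (m, t) (1, 0)) m := by
  have h1 : HasDerivAt (fun m' : ℝ => ((m', t) : ℝ × ℝ)) (1, 0) m :=
    (hasDerivAt_id m).prodMk (hasDerivAt_const m t)
  exact hF.hasFDerivAt.comp_hasDerivAt m h1

lemma pd2_hasDerivAt {F : ℝ → ℝ → ℝ} {m t : ℝ}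
    (hF : DifferentiableAt ℝ (fun q : ℝ × ℝ => F q.1 q.2) (m, t)) :
    HasDerivAt (fun t' => F m t')
      (fderiv ℝ (fun q : ℝ × ℝ => F q.1 q.2) (m, t) (0, 1)) t := by
  have h1 : HasDerivAt (fun t' : ℝ => ((m, t') : ℝ × ℝ)) (0, 1) t :=
    (hasDerivAt_const t m).prodMk (hasDerivAt_id t)
  exact hF.hasFDerivAt.comp_hasDerivAt t h1

lemma fderiv_pd {F : ℝ × ℝ → ℝ} (hF : ContDiff ℝ 2 F) (p v w : ℝ × ℝ) :
    fderiv ℝ (fun q => fderiv ℝ F q v) p w = fderiv ℝ (fderiv ℝ F) p w v := by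
  have hd : DifferentiableAt ℝ (fderiv ℝ F) p :=
    ((hF.fderiv_right (m := 1) (le_refl 2)).differentiable (by norm_num)) p
  rw [fderiv_clm_apply hd (differentiableAt_const v)]
  simp

lemma cross_pd {F : ℝ × ℝ → ℝ} (hF : ContDiff ℝ 2 F) (p v w : ℝ × ℝ) :
    fderiv ℝ (fun q => fderiv ℝ F q v) p w
      = fderiv ℝ (fun q => fderiv ℝ F q w) p v := by
  rw [fderiv_pd hF, fderiv_pd hF]
  exact (hF.contDiffAt.isSymmSndFDerivAt (by simp)) w v

/-- The nonlocal `m`-translation conservation law of Lagrangian 1D gas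
dynamics: `∂_t [ u x_m + r S_m ] + ∂_m [ W - u²/2 ] = 0`, where `W = (ε+P)/ρ`
is the enthalpy and `r` is the Clebsch potential with `r_t = -T`. -/
theorem nonlocal_m_translation_conservation
    (ε : ℝ × ℝ → ℝ) (hε : ContDiff ℝ (⊤ : ℕ∞) ε)
    (x u S r : ℝ → ℝ → ℝ)
    (hx : ContDiff ℝ 2 (fun q : ℝ × ℝ => x q.1 q.2))
    (hu : ContDiff ℝ 2 (fun q : ℝ × ℝ => u q.1 q.2))
    (hS : ContDiff ℝ 2 (fun q : ℝ × ℝ => S q.1 q.2))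
    (hr : ContDiff ℝ 2 (fun q : ℝ × ℝ => r q.1 q.2))
    (xm ρ P T W : ℝ → ℝ → ℝ)
    (hxm : ∀ m t : ℝ, xm m t = deriv (fun m' => x m' t) m)
    (hpos : ∀ m t : ℝ, 0 < xm m t)
    (hρ : ∀ m t : ℝ, ρ m t = 1 / xm m t)
    (hP : ∀ m t : ℝ, P m t
      = ρ m t * deriv (fun rr => ε (rr, S m t)) (ρ m t) - ε (ρ m t, S m t))
    (hT : ∀ m t : ℝ, T m t = (1 / ρ m t) * deriv (fun s => ε (ρ m t, s)) (S m t))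
    (hW : ∀ m t : ℝ, W m t = (ε (ρ m t, S m t) + P m t) / ρ m t)
    (hu_eq : ∀ m t : ℝ, u m t = deriv (fun t' => x m t') t)
    (hSt : ∀ m t : ℝ, deriv (fun t' => S m t') t = 0)
    (hmom : ∀ m t : ℝ,
      deriv (fun t' => u m t') t + deriv (fun m' => P m' t) m = 0)
    (hrt : ∀ m t : ℝ, deriv (fun t' => r m t') t = -T m t) :
    ∀ m t : ℝ,
      deriv (fun t' => u m t' * xm m t' + r m t' * deriv (fun m' => S m' t') m) t
        + deriv (fun m' => W m' t - (u m' t) ^ 2 / 2) m = 0 := by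
  intro m t
  -- differentiability of the basic fields
  have hxd : Differentiable ℝ (fun q : ℝ × ℝ => x q.1 q.2) := hx.differentiable (by norm_num)
  have hud : Differentiable ℝ (fun q : ℝ × ℝ => u q.1 q.2) := hu.differentiable (by norm_num)
  have hSd : Differentiable ℝ (fun q : ℝ × ℝ => S q.1 q.2) := hS.differentiable (by norm_num)
  have hrd : Differentiable ℝ (fun q : ℝ × ℝ => r q.1 q.2) := hr.differentiable (by norm_num)
  have hεd : Differentiable ℝ ε := hε.differentiable (by simp)
  -- C¹ partial-derivative fields
  have hX1 : ContDiff ℝ 1 (fun q : ℝ × ℝ => fderiv ℝ (fun q : ℝ × ℝ => x q.1 q.2) q (1, 0)) :=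
    (hx.fderiv_right (le_refl 2)).clm_apply contDiff_const
  have hS1 : ContDiff ℝ 1 (fun q : ℝ × ℝ => fderiv ℝ (fun q : ℝ × ℝ => S q.1 q.2) q (1, 0)) :=
    (hS.fderiv_right (le_refl 2)).clm_apply contDiff_const
  have hε1 : ContDiff ℝ 1 (fun q : ℝ × ℝ => fderiv ℝ ε q ((1 : ℝ), (0 : ℝ))) :=
    (hε.fderiv_right (by norm_cast)).clm_apply contDiff_const
  -- pointwise identities for partial derivatives of ε
  have hεr : ∀ a b : ℝ, deriv (fun rr => ε (rr, b)) a = fderiv ℝ ε (a, b) (1, 0) :=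
    fun a b => (pd1_hasDerivAt (F := fun a b => ε (a, b)) (hεd (a, b))).deriv
  have hεs : ∀ a b : ℝ, deriv (fun s => ε (a, s)) b = fderiv ℝ ε (a, b) (0, 1) :=
    fun a b => (pd2_hasDerivAt (F := fun a b => ε (a, b)) (hεd (a, b))).deriv
  -- xm as a partial derivative field
  have hxmfun : ∀ m' t' : ℝ,
      xm m' t' = fderiv ℝ (fun q : ℝ × ℝ => x q.1 q.2) (m', t') (1, 0) := by
    intro m' t'
    rw [hxm]
    exact (pd1_hasDerivAt (hxd (m', t'))).deriv
  -- u as a partial derivative field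
  have hufun : ∀ m' t' : ℝ,
      u m' t' = fderiv ℝ (fun q : ℝ × ℝ => x q.1 q.2) (m', t') (0, 1) := by
    intro m' t'
    rw [hu_eq]
    exact (pd2_hasDerivAt (hxd (m', t'))).deriv
  -- S_m as a partial derivative field
  have hSmfun : ∀ m' t' : ℝ,
      deriv (fun m'' => S m'' t') m' = fderiv ℝ (fun q : ℝ × ℝ => S q.1 q.2) (m', t') (1, 0) :=
    fun m' t' => (pd1_hasDerivAt (hSd (m', t'))).deriv
  ---- time-derivative part ----
  have h1 : HasDerivAt (fun t' => u m t')
      (fderiv ℝ (fun q : ℝ × ℝ => u q.1 q.2) (m, t) (0, 1)) t := pd2_hasDerivAt (hud (m, t))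
  have h2 : HasDerivAt (fun t' => xm m t')
      (fderiv ℝ (fun q : ℝ × ℝ => fderiv ℝ (fun q : ℝ × ℝ => x q.1 q.2) q (1, 0)) (m, t) (0, 1))
      t := by
    have h := pd2_hasDerivAt
      (F := fun a b => fderiv ℝ (fun q : ℝ × ℝ => x q.1 q.2) (a, b) (1, 0))
      (m := m) (t := t) ((hX1.differentiable (by norm_num)) (m, t))
    exact h.congr_of_eventuallyEq (Filter.Eventually.of_forall fun t' => hxmfun m t')
  have h3 : HasDerivAt (fun t' => r m t')
      (fderiv ℝ (fun q : ℝ × ℝ => r q.1 q.2) (m, t) (0, 1)) t := pd2_hasDerivAt (hrd (m, t))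
  have h4 : HasDerivAt (fun t' => deriv (fun m' => S m' t') m)
      (fderiv ℝ (fun q : ℝ × ℝ => fderiv ℝ (fun q : ℝ × ℝ => S q.1 q.2) q (1, 0)) (m, t) (0, 1))
      t := by
    have h := pd2_hasDerivAt
      (F := fun a b => fderiv ℝ (fun q : ℝ × ℝ => S q.1 q.2) (a, b) (1, 0))
      (m := m) (t := t) ((hS1.differentiable (by norm_num)) (m, t))
    exact h.congr_of_eventuallyEq (Filter.Eventually.of_forall fun t' => hSmfun m t')
  have e1 : deriv (fun t' => u m t' * xm m t' + r m t' * deriv (fun m' => S m' t') m) t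
      = (fderiv ℝ (fun q : ℝ × ℝ => u q.1 q.2) (m, t) (0, 1) * xm m t
          + u m t * fderiv ℝ (fun q : ℝ × ℝ => fderiv ℝ (fun q : ℝ × ℝ => x q.1 q.2) q (1, 0))
              (m, t) (0, 1))
        + (fderiv ℝ (fun q : ℝ × ℝ => r q.1 q.2) (m, t) (0, 1) * deriv (fun m' => S m' t) m
          + r m t * fderiv ℝ (fun q : ℝ × ℝ => fderiv ℝ (fun q : ℝ × ℝ => S q.1 q.2) q (1, 0))
              (m, t) (0, 1)) :=
    ((h1.mul h2).add (h3.mul h4)).deriv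
  -- mixed-derivative identities
  have hxmt : fderiv ℝ (fun q : ℝ × ℝ => fderiv ℝ (fun q : ℝ × ℝ => x q.1 q.2) q (1, 0))
      (m, t) (0, 1) = fderiv ℝ (fun q : ℝ × ℝ => u q.1 q.2) (m, t) (1, 0) := by
    rw [cross_pd hx (m, t) (1, 0) (0, 1)]
    have hfeq : (fun q : ℝ × ℝ => u q.1 q.2)
        = fun q : ℝ × ℝ => fderiv ℝ (fun q : ℝ × ℝ => x q.1 q.2) q (0, 1) := by
      funext q
      exact hufun q.1 q.2
    rw [← hfeq]
  have hsmt : fderiv ℝ (fun q : ℝ × ℝ => fderiv ℝ (fun q : ℝ × ℝ => S q.1 q.2) q (1, 0))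
      (m, t) (0, 1) = 0 := by
    rw [cross_pd hS (m, t) (1, 0) (0, 1)]
    have hzero : (fun q : ℝ × ℝ => fderiv ℝ (fun q : ℝ × ℝ => S q.1 q.2) q (0, 1))
        = fun _ => (0 : ℝ) := by
      funext q
      exact ((pd2_hasDerivAt (hSd (q.1, q.2))).deriv).symm.trans (hSt q.1 q.2)
    rw [hzero]
    simp
  ---- m-derivative part ----
  have hρpos : ∀ m' t' : ℝ, 0 < ρ m' t' := by
    intro m' t'
    rw [hρ]
    exact one_div_pos.mpr (hpos m' t')
  have hxmm : HasDerivAt (fun m' => xm m' t)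
      (fderiv ℝ (fun q : ℝ × ℝ => fderiv ℝ (fun q : ℝ × ℝ => x q.1 q.2) q (1, 0)) (m, t) (1, 0))
      m := by
    have h := pd1_hasDerivAt
      (F := fun a b => fderiv ℝ (fun q : ℝ × ℝ => x q.1 q.2) (a, b) (1, 0))
      (m := m) (t := t) ((hX1.differentiable (by norm_num)) (m, t))
    exact h.congr_of_eventuallyEq (Filter.Eventually.of_forall fun m' => hxmfun m' t)
  obtain ⟨ρm, hρm⟩ : ∃ d, HasDerivAt (fun m' => ρ m' t) d m := by
    refine ⟨_, (((hasDerivAt_const m (1 : ℝ)).div hxmm (hpos m t).ne').congr_of_eventuallyEq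
      (Filter.Eventually.of_forall fun m' => hρ m' t))⟩
  have hsm : HasDerivAt (fun m' => S m' t)
      (fderiv ℝ (fun q : ℝ × ℝ => S q.1 q.2) (m, t) (1, 0)) m := pd1_hasDerivAt (hSd (m, t))
  have hcurve : HasDerivAt (fun m' => ((ρ m' t, S m' t) : ℝ × ℝ))
      (ρm, fderiv ℝ (fun q : ℝ × ℝ => S q.1 q.2) (m, t) (1, 0)) m := hρm.prodMk hsm
  set sm := fderiv ℝ (fun q : ℝ × ℝ => S q.1 q.2) (m, t) (1, 0) with hsm_def
  have hF1 : HasDerivAt (fun m' => fderiv ℝ ε (ρ m' t, S m' t) ((1 : ℝ), (0 : ℝ)))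
      (fderiv ℝ (fun q : ℝ × ℝ => fderiv ℝ ε q ((1 : ℝ), (0 : ℝ))) (ρ m t, S m t) (ρm, sm)) m :=
    by have := ((hε1.differentiable one_ne_zero) (ρ m t, S m t)).hasFDerivAt.comp_hasDerivAt m hcurve; exact this
  have hεcomp : HasDerivAt (fun m' => ε (ρ m' t, S m' t))
      (fderiv ℝ ε (ρ m t, S m t) (ρm, sm)) m := (hεd (ρ m t, S m t)).hasFDerivAt.comp_hasDerivAt m hcurve
  have hWfun : ∀ m' : ℝ, W m' t = fderiv ℝ ε (ρ m' t, S m' t) ((1 : ℝ), (0 : ℝ)) := by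
    intro m'
    have hne : ρ m' t ≠ 0 := (hρpos m' t).ne'
    rw [hW, hP, hεr]
    field_simp
    ring
  have hWm : HasDerivAt (fun m' => W m' t)
      (fderiv ℝ (fun q : ℝ × ℝ => fderiv ℝ ε q ((1 : ℝ), (0 : ℝ))) (ρ m t, S m t) (ρm, sm)) m :=
    hF1.congr_of_eventuallyEq (Filter.Eventually.of_forall fun m' => hWfun m')
  have hPm : HasDerivAt (fun m' => P m' t)
      (ρm * fderiv ℝ ε (ρ m t, S m t) ((1 : ℝ), (0 : ℝ))
        + ρ m t * fderiv ℝ (fun q : ℝ × ℝ => fderiv ℝ ε q ((1 : ℝ), (0 : ℝ))) (ρ m t, S m t) (ρm, sm)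
        - fderiv ℝ ε (ρ m t, S m t) (ρm, sm)) m := by
    have hPfun : ∀ m' : ℝ, P m' t
        = ρ m' t * fderiv ℝ ε (ρ m' t, S m' t) ((1 : ℝ), (0 : ℝ)) - ε (ρ m' t, S m' t) := by
      intro m'
      rw [hP, hεr]
    have h := (hρm.mul hF1).sub hεcomp
    exact h.congr_of_eventuallyEq (Filter.Eventually.of_forall fun m' => hPfun m')
  have hum : HasDerivAt (fun m' => u m' t)
      (fderiv ℝ (fun q : ℝ × ℝ => u q.1 q.2) (m, t) (1, 0)) m := pd1_hasDerivAt (hud (m, t))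
  have hu2 : HasDerivAt (fun m' => u m' t ^ 2 / 2)
      ((2 : ℕ) * u m t ^ 1 * fderiv ℝ (fun q : ℝ × ℝ => u q.1 q.2) (m, t) (1, 0) / 2) m :=
    (hum.pow 2).div_const 2
  have e2 : deriv (fun m' => W m' t - (u m' t) ^ 2 / 2) m
      = fderiv ℝ (fun q : ℝ × ℝ => fderiv ℝ ε q ((1 : ℝ), (0 : ℝ))) (ρ m t, S m t) (ρm, sm)
        - (2 : ℕ) * u m t ^ 1 * fderiv ℝ (fun q : ℝ × ℝ => u q.1 q.2) (m, t) (1, 0) / 2 :=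
    (hWm.sub hu2).deriv
  -- linearity of the differential
  have hlin : fderiv ℝ ε (ρ m t, S m t) (ρm, sm)
      = ρm * fderiv ℝ ε (ρ m t, S m t) ((1 : ℝ), (0 : ℝ)) + sm * fderiv ℝ ε (ρ m t, S m t) ((0 : ℝ), (1 : ℝ)) := by
    have h : ((ρm, sm) : ℝ × ℝ) = ρm • ((1 : ℝ), (0 : ℝ)) + sm • ((0 : ℝ), (1 : ℝ)) := by
      simp
    rw [h, map_add, map_smul, map_smul]
    simp
  -- momentum equation in explicit form
  have hmom' := hmom m t
  rw [h1.deriv, hPm.deriv] at hmom'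
  -- r_t = -T
  have hrt' := hrt m t
  rw [h3.deriv, hT, hεs] at hrt'
  rw [hlin] at hmom'
  -- assemble
  rw [e1, e2, hxmt, hsmt, hrt', hSmfun m t, ← hsm_def]
  have hinv : (1 : ℝ) / ρ m t = xm m t := by rw [hρ m t, one_div_one_div]
  have hcb : ρ m t * xm m t = 1 := by
    rw [hρ m t]
    exact one_div_mul_cancel (hpos m t).ne'
  rw [hinv]
  push_cast
  linear_combination xm m t * hmom'
    + (-(fderiv ℝ (fun q : ℝ × ℝ => fderiv ℝ ε q ((1 : ℝ), (0 : ℝ))) (ρ m t, S m t) (ρm, sm)))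
      * hcb
end

section
/- Let ρ, u, S, r : ℝ × ℝ → ℝ be twice continuously differentiable functions of (x,t) with ρ > 0 everywhere, satisfying ρ_t + u·ρ_x + ρ·u_x = 0, ρ·(u_t + u·u_x) + p_x = 0, S_t + u·S_x = 0, and r_t + u·r_x = −T, where p(x,t) = ρ·∂ε/∂ρ(ρ,S) − ε(ρ,S) and T(x,t) = (1/ρ)·∂ε/∂S(ρ,S). Then the Eulerian nonlocal conservation law holds: ∂/∂t [ u + r·S_x ] + ∂/∂x [ w + u²/2 + u·r·S_x ] = 0 at every point, where w = (ε(ρ,S) + p)/ρ. -/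
noncomputable def D1 (F : ℝ × ℝ → ℝ) (q : ℝ × ℝ) : ℝ := fderiv ℝ F q (1, 0)
noncomputable def D2 (F : ℝ × ℝ → ℝ) (q : ℝ × ℝ) : ℝ := fderiv ℝ F q (0, 1)

lemma sliceX {F : ℝ × ℝ → ℝ} (hF : Differentiable ℝ F) (x t : ℝ) :
    HasDerivAt (fun x' => F (x', t)) (D1 F (x, t)) x := by
  have h : HasDerivAt (fun x' : ℝ => ((x' : ℝ), t)) ((1 : ℝ), (0 : ℝ)) x :=
    (hasDerivAt_id x).prodMk (hasDerivAt_const x t)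
  exact (hF (x, t)).hasFDerivAt.comp_hasDerivAt x h

lemma sliceT {F : ℝ × ℝ → ℝ} (hF : Differentiable ℝ F) (x t : ℝ) :
    HasDerivAt (fun t' => F (x, t')) (D2 F (x, t)) t := by
  have h : HasDerivAt (fun t' : ℝ => (x, (t' : ℝ))) ((0 : ℝ), (1 : ℝ)) t :=
    (hasDerivAt_const t x).prodMk (hasDerivAt_id t)
  exact (hF (x, t)).hasFDerivAt.comp_hasDerivAt t h

lemma diffD1 {F : ℝ × ℝ → ℝ} (hF : ContDiff ℝ 2 F) : Differentiable ℝ (D1 F) := by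
  have h := (hF.fderiv_right (m := 1) (by norm_num)).differentiable one_ne_zero
  exact fun q => ((h q).clm_apply (differentiableAt_const _))

lemma diffD2 {F : ℝ × ℝ → ℝ} (hF : ContDiff ℝ 2 F) : Differentiable ℝ (D2 F) := by
  have h := (hF.fderiv_right (m := 1) (by norm_num)).differentiable one_ne_zero
  exact fun q => ((h q).clm_apply (differentiableAt_const _))

lemma fderiv_Dv {F : ℝ × ℝ → ℝ} (hF : ContDiff ℝ 2 F) (q v w : ℝ × ℝ) :
    fderiv ℝ (fun y => fderiv ℝ F y v) q w = fderiv ℝ (fderiv ℝ F) q w v := by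
  rw [fderiv_clm_apply (((hF.fderiv_right (m := 1) (by norm_num)).differentiable one_ne_zero) q)
    (differentiableAt_const v)]
  simp

lemma symmD {F : ℝ × ℝ → ℝ} (hF : ContDiff ℝ 2 F) (q : ℝ × ℝ) :
    D2 (D1 F) q = D1 (D2 F) q := by
  have hs := (hF.contDiffAt (x := q)).isSymmSndFDerivAt (by simp)
  show fderiv ℝ (fun y => fderiv ℝ F y (1,0)) q (0,1) = fderiv ℝ (fun y => fderiv ℝ F y (0,1)) q (1,0)
  rw [fderiv_Dv hF, fderiv_Dv hF]
  exact hs (0,1) (1,0)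


/-- Eulerian nonlocal conservation law involving the Clebsch potential `r`
(with `r_t + u r_x = -T`):
`∂_t [ u + r S_x ] + ∂_x [ w + u²/2 + u r S_x ] = 0`. -/
theorem eulerian_nonlocal_conservation
    (ε : ℝ × ℝ → ℝ) (hε : ContDiff ℝ (⊤ : ℕ∞) ε)
    (ρ u S r : ℝ → ℝ → ℝ)
    (hρ : ContDiff ℝ 2 (fun q : ℝ × ℝ => ρ q.1 q.2))
    (hu : ContDiff ℝ 2 (fun q : ℝ × ℝ => u q.1 q.2))
    (hS : ContDiff ℝ 2 (fun q : ℝ × ℝ => S q.1 q.2))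
    (hr : ContDiff ℝ 2 (fun q : ℝ × ℝ => r q.1 q.2))
    (hpos : ∀ x t : ℝ, 0 < ρ x t)
    (p T w : ℝ → ℝ → ℝ)
    (hp : ∀ x t : ℝ, p x t
      = ρ x t * deriv (fun rr => ε (rr, S x t)) (ρ x t) - ε (ρ x t, S x t))
    (hT : ∀ x t : ℝ, T x t = (1 / ρ x t) * deriv (fun s => ε (ρ x t, s)) (S x t))
    (hw : ∀ x t : ℝ, w x t = (ε (ρ x t, S x t) + p x t) / ρ x t)
    (hmass : ∀ x t : ℝ,
      deriv (fun t' => ρ x t') t + u x t * deriv (fun x' => ρ x' t) x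
        + ρ x t * deriv (fun x' => u x' t) x = 0)
    (hmom : ∀ x t : ℝ,
      ρ x t * (deriv (fun t' => u x t') t + u x t * deriv (fun x' => u x' t) x)
        + deriv (fun x' => p x' t) x = 0)
    (hent : ∀ x t : ℝ,
      deriv (fun t' => S x t') t + u x t * deriv (fun x' => S x' t) x = 0)
    (hrt : ∀ x t : ℝ,
      deriv (fun t' => r x t') t + u x t * deriv (fun x' => r x' t) x = -T x t) :
    ∀ x t : ℝ,
      deriv (fun t' => u x t' + r x t' * deriv (fun x' => S x' t') x) t
        + deriv (fun x' => w x' t + (u x' t) ^ 2 / 2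
            + u x' t * r x' t * deriv (fun x'' => S x'' t) x') x = 0 := by
  intro x t
  have hρd : Differentiable ℝ (fun q : ℝ × ℝ => ρ q.1 q.2) := hρ.differentiable two_ne_zero
  have hud : Differentiable ℝ (fun q : ℝ × ℝ => u q.1 q.2) := hu.differentiable two_ne_zero
  have hSd : Differentiable ℝ (fun q : ℝ × ℝ => S q.1 q.2) := hS.differentiable two_ne_zero
  have hrd : Differentiable ℝ (fun q : ℝ × ℝ => r q.1 q.2) := hr.differentiable two_ne_zero
  have hεd : Differentiable ℝ ε := hε.differentiable (by simp)
  have hε2 : ContDiff ℝ 2 ε := hε.of_le (WithTop.coe_le_coe.mpr le_top)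
  have hGs : Differentiable ℝ (D1 (fun q : ℝ × ℝ => S q.1 q.2)) := diffD1 hS
  have hGt : Differentiable ℝ (D2 (fun q : ℝ × ℝ => S q.1 q.2)) := diffD2 hS
  have hE1 : Differentiable ℝ (D1 ε) := diffD1 hε2
  have hρ0 : ρ x t ≠ 0 := (hpos x t).ne'
  -- derivative identifications
  have kSx : ∀ x' t' : ℝ, deriv (fun x'' => S x'' t') x' = D1 (fun q : ℝ × ℝ => S q.1 q.2) (x', t') :=
    fun x' t' => (sliceX hSd x' t').deriv
  have kSt : ∀ x' t' : ℝ, deriv (fun t'' => S x' t'') t' = D2 (fun q : ℝ × ℝ => S q.1 q.2) (x', t') :=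
    fun x' t' => (sliceT hSd x' t').deriv
  have kεx : ∀ a b : ℝ, deriv (fun rr => ε (rr, b)) a = D1 ε (a, b) :=
    fun a b => (sliceX hεd a b).deriv
  have kεt : ∀ a b : ℝ, deriv (fun s => ε (a, s)) b = D2 ε (a, b) :=
    fun a b => (sliceT hεd a b).deriv
  have kut : deriv (fun t' => u x t') t = D2 (fun q : ℝ × ℝ => u q.1 q.2) (x, t) :=
    (sliceT hud x t).deriv
  have kux : deriv (fun x' => u x' t) x = D1 (fun q : ℝ × ℝ => u q.1 q.2) (x, t) :=
    (sliceX hud x t).deriv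
  have krt : deriv (fun t' => r x t') t = D2 (fun q : ℝ × ℝ => r q.1 q.2) (x, t) :=
    (sliceT hrd x t).deriv
  have krx : deriv (fun x' => r x' t) x = D1 (fun q : ℝ × ℝ => r q.1 q.2) (x, t) :=
    (sliceX hrd x t).deriv
  -- w is the partial of ε in ρ
  have kw : ∀ x' : ℝ, w x' t = D1 ε (ρ x' t, S x' t) := by
    intro x'
    rw [hw, hp, kεx]
    field_simp [(hpos x' t).ne']
    ring
  -- A : the time derivative
  have eA : (fun t' => u x t' + r x t' * deriv (fun x' => S x' t') x)
      = fun t' => u x t' + r x t' * D1 (fun q : ℝ × ℝ => S q.1 q.2) (x, t') := by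
    funext t'; rw [kSx]
  have hA : HasDerivAt (fun t' => u x t' + r x t' * D1 (fun q : ℝ × ℝ => S q.1 q.2) (x, t'))
      (D2 (fun q : ℝ × ℝ => u q.1 q.2) (x, t)
        + (D2 (fun q : ℝ × ℝ => r q.1 q.2) (x, t) * D1 (fun q : ℝ × ℝ => S q.1 q.2) (x, t)
          + r x t * D2 (D1 (fun q : ℝ × ℝ => S q.1 q.2)) (x, t))) t :=
    (sliceT hud x t).add ((sliceT hrd x t).mul (sliceT hGs x t))
  -- mixed partial via entropy equation and Clairaut
  have eEnt : (fun x' => D2 (fun q : ℝ × ℝ => S q.1 q.2) (x', t))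
      = fun x' => -(u x' t * D1 (fun q : ℝ × ℝ => S q.1 q.2) (x', t)) := by
    funext x'
    have h := hent x' t
    rw [kSt, kSx] at h
    linarith
  have dmix : D2 (D1 (fun q : ℝ × ℝ => S q.1 q.2)) (x, t)
      = -(D1 (fun q : ℝ × ℝ => u q.1 q.2) (x, t) * D1 (fun q : ℝ × ℝ => S q.1 q.2) (x, t)
          + u x t * D1 (D1 (fun q : ℝ × ℝ => S q.1 q.2)) (x, t)) := by
    rw [symmD hS]
    have h1 : HasDerivAt (fun x' => D2 (fun q : ℝ × ℝ => S q.1 q.2) (x', t))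
        (D1 (D2 (fun q : ℝ × ℝ => S q.1 q.2)) (x, t)) x := sliceX hGt x t
    rw [eEnt] at h1
    have h2 : HasDerivAt (fun x' => -(u x' t * D1 (fun q : ℝ × ℝ => S q.1 q.2) (x', t)))
        (-(D1 (fun q : ℝ × ℝ => u q.1 q.2) (x, t) * D1 (fun q : ℝ × ℝ => S q.1 q.2) (x, t)
          + u x t * D1 (D1 (fun q : ℝ × ℝ => S q.1 q.2)) (x, t))) x :=
      ((sliceX hud x t).mul (sliceX hGs x t)).neg
    exact h1.unique h2
  -- B : the space derivative
  have eB : (fun x' => w x' t + u x' t ^ 2 / 2 + u x' t * r x' t * deriv (fun x'' => S x'' t) x')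
      = fun x' => D1 ε (ρ x' t, S x' t) + u x' t ^ 2 / 2
          + u x' t * r x' t * D1 (fun q : ℝ × ℝ => S q.1 q.2) (x', t) := by
    funext x'; rw [kw, kSx]
  have hcurve : HasDerivAt (fun x' => ((ρ x' t, S x' t) : ℝ × ℝ))
      ((D1 (fun q : ℝ × ℝ => ρ q.1 q.2) (x, t), D1 (fun q : ℝ × ℝ => S q.1 q.2) (x, t)) : ℝ × ℝ) x :=
    (sliceX hρd x t).prodMk (sliceX hSd x t)
  have hDE : HasDerivAt (fun x' => D1 ε (ρ x' t, S x' t))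
      (fderiv ℝ (D1 ε) (ρ x t, S x t)
        (D1 (fun q : ℝ × ℝ => ρ q.1 q.2) (x, t), D1 (fun q : ℝ × ℝ => S q.1 q.2) (x, t))) x :=
    (hE1 _).hasFDerivAt.comp_hasDerivAt x hcurve
  have hεc : HasDerivAt (fun x' => ε (ρ x' t, S x' t))
      (fderiv ℝ ε (ρ x t, S x t)
        (D1 (fun q : ℝ × ℝ => ρ q.1 q.2) (x, t), D1 (fun q : ℝ × ℝ => S q.1 q.2) (x, t))) x :=
    (hεd _).hasFDerivAt.comp_hasDerivAt x hcurve
  have hpow : HasDerivAt (fun x' => u x' t ^ 2 / 2)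
      (u x t * D1 (fun q : ℝ × ℝ => u q.1 q.2) (x, t)) x := by
    have h := ((sliceX hud x t).pow 2).div_const 2
    refine h.congr_deriv ?_
    push_cast
    ring
  have hB : HasDerivAt (fun x' => D1 ε (ρ x' t, S x' t) + u x' t ^ 2 / 2
      + u x' t * r x' t * D1 (fun q : ℝ × ℝ => S q.1 q.2) (x', t))
      (fderiv ℝ (D1 ε) (ρ x t, S x t)
        (D1 (fun q : ℝ × ℝ => ρ q.1 q.2) (x, t), D1 (fun q : ℝ × ℝ => S q.1 q.2) (x, t))
        + u x t * D1 (fun q : ℝ × ℝ => u q.1 q.2) (x, t)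
        + ((D1 (fun q : ℝ × ℝ => u q.1 q.2) (x, t) * r x t
            + u x t * D1 (fun q : ℝ × ℝ => r q.1 q.2) (x, t))
              * D1 (fun q : ℝ × ℝ => S q.1 q.2) (x, t)
          + u x t * r x t * D1 (D1 (fun q : ℝ × ℝ => S q.1 q.2)) (x, t))) x :=
    (hDE.add hpow).add (((sliceX hud x t).mul (sliceX hrd x t)).mul (sliceX hGs x t))
  -- pressure derivative
  have ep : (fun x' => p x' t)
      = fun x' => ρ x' t * D1 ε (ρ x' t, S x' t) - ε (ρ x' t, S x' t) := by
    funext x'; rw [hp, kεx]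
  have hpslice : HasDerivAt (fun x' => ρ x' t * D1 ε (ρ x' t, S x' t) - ε (ρ x' t, S x' t))
      (D1 (fun q : ℝ × ℝ => ρ q.1 q.2) (x, t) * D1 ε (ρ x t, S x t)
        + ρ x t * fderiv ℝ (D1 ε) (ρ x t, S x t)
            (D1 (fun q : ℝ × ℝ => ρ q.1 q.2) (x, t), D1 (fun q : ℝ × ℝ => S q.1 q.2) (x, t))
        - fderiv ℝ ε (ρ x t, S x t)
            (D1 (fun q : ℝ × ℝ => ρ q.1 q.2) (x, t), D1 (fun q : ℝ × ℝ => S q.1 q.2) (x, t))) x :=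
    ((sliceX hρd x t).mul hDE).sub hεc
  have dpx : deriv (fun x' => p x' t) x
      = D1 (fun q : ℝ × ℝ => ρ q.1 q.2) (x, t) * D1 ε (ρ x t, S x t)
        + ρ x t * fderiv ℝ (D1 ε) (ρ x t, S x t)
            (D1 (fun q : ℝ × ℝ => ρ q.1 q.2) (x, t), D1 (fun q : ℝ × ℝ => S q.1 q.2) (x, t))
        - fderiv ℝ ε (ρ x t, S x t)
            (D1 (fun q : ℝ × ℝ => ρ q.1 q.2) (x, t), D1 (fun q : ℝ × ℝ => S q.1 q.2) (x, t)) := by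
    rw [ep]; exact hpslice.deriv
  -- linear expansion of the ε gradient
  have hlin : fderiv ℝ ε (ρ x t, S x t)
      ((D1 (fun q : ℝ × ℝ => ρ q.1 q.2) (x, t), D1 (fun q : ℝ × ℝ => S q.1 q.2) (x, t)) : ℝ × ℝ)
      = D1 (fun q : ℝ × ℝ => ρ q.1 q.2) (x, t) * D1 ε (ρ x t, S x t)
        + D1 (fun q : ℝ × ℝ => S q.1 q.2) (x, t) * D2 ε (ρ x t, S x t) := by
    have hv : ((D1 (fun q : ℝ × ℝ => ρ q.1 q.2) (x, t), D1 (fun q : ℝ × ℝ => S q.1 q.2) (x, t)) : ℝ × ℝ)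
        = D1 (fun q : ℝ × ℝ => ρ q.1 q.2) (x, t) • ((1 : ℝ), (0 : ℝ))
          + D1 (fun q : ℝ × ℝ => S q.1 q.2) (x, t) • ((0 : ℝ), (1 : ℝ)) := by
      simp [Prod.ext_iff]
    rw [hv, map_add, map_smul, map_smul]
    simp [D1, D2, smul_eq_mul]
  -- momentum equation with expanded pressure derivative
  have hm := hmom x t
  rw [kut, kux, dpx, hlin] at hm
  -- Clebsch equation with temperature expanded
  have hr' := hrt x t
  rw [krt, krx, hT, kεt] at hr'
  have hr3 : ρ x t * (D2 (fun q : ℝ × ℝ => r q.1 q.2) (x, t)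
      + u x t * D1 (fun q : ℝ × ℝ => r q.1 q.2) (x, t)) = -(D2 ε (ρ x t, S x t)) := by
    rw [hr']
    field_simp
  -- assemble
  rw [eA, hA.deriv, eB, hB.deriv, dmix]
  apply mul_left_cancel₀ hρ0
  rw [mul_zero]
  linear_combination hm + D1 (fun q : ℝ × ℝ => S q.1 q.2) (x, t) * hr3
end
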